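/- arXiv:2403.04213 — 12 statements merged into one kernel-verified Lean document; each statement's English description precedes it below -/
import Mathlib

section
/- Let (β_m)_{m≥0} be a sequence of complex numbers with β_0 = 1 satisfying β_{m+n} + (n−m)β_{m+n+1} = β_n β_m + n β_m β_{n+1} − m β_n β_{m+1} for all m, n ≥ 0. Then β_m = β_1^m for all m ≥ 0. -/
/-! Adding the recurrence at `(m, n) = (1, n)` to the one at `(n, 1)` cancels the terms with
coefficient `n - 1` and leaves `2 β (n + 1) = 2 β 1 β n`, so `β` is geometric with ratio `β 1`. -/

theorem succ_eq_mul_of_quadratic_rec {K : Type*} [CommRing K] [IsDomain K] [NeZero (2 : K)]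
    (β : ℕ → K)
    (hrec : ∀ m n : ℕ, β (m + n) + ((n : K) - (m : K)) * β (m + n + 1) =
      β n * β m + (n : K) * β m * β (n + 1) - (m : K) * β n * β (m + 1))
    (n : ℕ) : β (n + 1) = β 1 * β n := by
  have h1n := hrec 1 n
  have hn1 := hrec n 1
  rw [Nat.add_comm 1 n] at h1n
  have hsum : 2 * β (n + 1) = 2 * (β 1 * β n) := by linear_combination h1n + hn1
  exact mul_left_cancel₀ two_ne_zero hsum

/-- A sequence `β : ℕ → ℂ` with `β 0 = 1` satisfying the quadratic
recurrence satisfies `β m = (β 1) ^ m`. -/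
theorem stmt_0 (β : ℕ → ℂ) (h0 : β 0 = 1)
    (hrec : ∀ m n : ℕ, β (m + n) + ((n : ℂ) - (m : ℂ)) * β (m + n + 1) =
      β n * β m + (n : ℂ) * β m * β (n + 1) - (m : ℂ) * β n * β (m + 1)) :
    ∀ m : ℕ, β m = (β 1) ^ m := by
  intro m
  induction m with
  | zero => rw [h0, pow_zero]
  | succ k ih => rw [succ_eq_mul_of_quadratic_rec β hrec k, ih, pow_succ']
end

section
/- Let λ ∈ ℂ*, α ∈ ℂ, and define L_i acting on ℂ[t] by L_i · f(t) = λ^i (t − iα) f(t − i) for i ∈ ℤ. Then [L_i, L_j] = (j − i) L_{i+j} as operators on ℂ[t]; that is, L_i(L_j f) − L_j(L_i f) = (j − i) L_{i+j} f for all f ∈ ℂ[t]. -/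
open Polynomial

/-- The action of the Virasoro basis element `L_i` on `ℂ[t]`:
`(L_i f)(t) = λ^i (t - iα) f(t - i)`. -/
noncomputable def virL (lam α : ℂ) (i : ℤ) (f : ℂ[X]) : ℂ[X] :=
  C (lam ^ i) * (X - C ((i : ℂ) * α)) * f.comp (X - C (i : ℂ))

theorem Polynomial.comp_X_sub_C_comp_X_sub_C {R : Type*} [CommRing R] (f : R[X]) (a b : R) :
    (f.comp (X - C a)).comp (X - C b) = f.comp (X - C (a + b)) := by
  rw [comp_assoc, sub_comp, X_comp, C_comp, C_add]
  ring_nf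

theorem virL_virL {lam : ℂ} (hlam : lam ≠ 0) (α : ℂ) (i j : ℤ) (f : ℂ[X]) :
    virL lam α i (virL lam α j f) =
      C (lam ^ (i + j)) * ((X - C ((i : ℂ) * α)) * (X - C ((i : ℂ) + j * α))) *
        f.comp (X - C ((i + j : ℤ) : ℂ)) := by
  simp only [virL, mul_comp, comp_X_sub_C_comp_X_sub_C, C_comp, sub_comp, X_comp,
    zpow_add₀ hlam, map_mul, map_add, Int.cast_add, add_comm (j : ℂ) i]
  ring

/- Both products equal `λ^(i+j) f(t - i - j)` times a quadratic in `t`, and the two quadratics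
differ by `(j - i)(t - (i + j)α)`. -/
/-- `[L_i, L_j] = (j - i) L_{i+j}` as operators on `ℂ[t]`. -/
theorem stmt_4 (lam α : ℂ) (hlam : lam ≠ 0) (i j : ℤ) (f : ℂ[X]) :
    virL lam α i (virL lam α j f) - virL lam α j (virL lam α i f) =
      ((j - i : ℤ) : ℂ) • virL lam α (i + j) f := by
  rw [virL_virL hlam, virL_virL hlam, add_comm j i, virL, smul_eq_C_mul]
  simp only [map_add, map_mul, map_intCast]
  push_cast
  ring
end

section
/- Let λ ∈ ℂ*, α ∈ ℂ with α ≠ 0. Then the Vir-module Ω_Vir(λ, α) = ℂ[t] with action L_i · f(t) = λ^i(t − iα) f(t − i) is simple: its only submodules are 0 and ℂ[t]. -/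
open Polynomial

/-!
Since `L_0` is multiplication by `t`, a submodule is an ideal `(p)` of `ℂ[t]`. Up to the unit
`λ^i`, invariance under `L_i` says `p ∣ (t - iα) p(t - i)`. If `p` had a root, take one, `r`, of
minimal real part: `r - i` is not a root for `i > 0`, so `r = iα` for `i = 1, 2`, forcing `α = 0`.
-/

theorem Submodule.exists_ideal_restrictScalars_eq_of_X_mul_mem {R : Type*} [CommRing R]
    (N : Submodule R R[X]) (hX : ∀ f ∈ N, X * f ∈ N) :
    ∃ I : Ideal R[X], I.restrictScalars R = N := by
  have hmul : ∀ p f : R[X], f ∈ N → p * f ∈ N := by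
    intro p f hf
    induction p using Polynomial.induction_on with
    | C c => simpa [← smul_eq_C_mul] using N.smul_mem c hf
    | add p q hp hq => simpa [add_mul] using N.add_mem hp hq
    | monomial n c ih =>
      simpa [pow_succ, mul_assoc, mul_left_comm _ X] using hX _ ih
  exact ⟨{ N with smul_mem' := fun p f hf => hmul p f hf }, rfl⟩

namespace Polynomial

theorem exists_isRoot_forall_re_le {p : ℂ[X]} (hp : 0 < p.degree) :
    ∃ r, p.IsRoot r ∧ ∀ s, p.IsRoot s → r.re ≤ s.re := by
  have hp0 : p ≠ 0 := ne_zero_of_degree_gt hp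
  obtain ⟨z, hz⟩ := Complex.exists_root hp
  obtain ⟨r, hr, hmin⟩ := p.roots.toFinset.exists_min_image Complex.re
    ⟨z, by simpa [hp0] using hz⟩
  exact ⟨r, by simpa [hp0] using hr, fun s hs => hmin s (by simpa [hp0] using hs)⟩

theorem eq_of_dvd_X_sub_C_mul_comp {p : ℂ[X]} {r a c : ℂ} (hr : p.IsRoot r)
    (hmin : ∀ s, p.IsRoot s → r.re ≤ s.re) (hc : 0 < c.re)
    (hdvd : p ∣ (X - C a) * p.comp (X - C c)) : r = a := by
  have hshift : ¬ p.IsRoot (r - c) := fun h => by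
    have := hmin _ h
    simp only [Complex.sub_re] at this
    linarith
  have heval : (r - a) * p.eval (r - c) = 0 := by
    simpa [hr.eq_zero] using eval_dvd (x := r) hdvd
  exact sub_eq_zero.mp ((mul_eq_zero.mp heval).resolve_right hshift)

theorem isUnit_of_dvd_X_sub_C_mul_comp {p : ℂ[X]} (hp : p ≠ 0) {a b c d : ℂ} (hab : a ≠ b)
    (hc : 0 < c.re) (hd : 0 < d.re) (hac : p ∣ (X - C a) * p.comp (X - C c))
    (hbd : p ∣ (X - C b) * p.comp (X - C d)) : IsUnit p := by
  by_contra hu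
  obtain ⟨r, hr, hmin⟩ := exists_isRoot_forall_re_le (degree_pos_of_ne_zero_of_nonunit hp hu)
  exact hab ((eq_of_dvd_X_sub_C_mul_comp hr hmin hc hac).symm.trans
    (eq_of_dvd_X_sub_C_mul_comp hr hmin hd hbd))

end Polynomial

theorem Ideal.eq_bot_or_eq_top_of_X_sub_C_mul_comp_mem {α : ℂ} (hα : α ≠ 0) (I : Ideal ℂ[X])
    (hI : ∀ (i : ℤ) (f : ℂ[X]), f ∈ I → (X - C ((i : ℂ) * α)) * f.comp (X - C (i : ℂ)) ∈ I) :
    I = ⊥ ∨ I = ⊤ := by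
  obtain ⟨p, rfl⟩ := (IsPrincipalIdealRing.principal I).principal
  rw [Ideal.submodule_span_eq, Ideal.span_singleton_eq_bot, Ideal.span_singleton_eq_top]
  refine or_iff_not_imp_left.mpr fun hp => ?_
  have hdvd (i : ℤ) : p ∣ (X - C ((i : ℂ) * α)) * p.comp (X - C (i : ℂ)) :=
    Ideal.mem_span_singleton.mp (hI i p (Ideal.mem_span_singleton_self p))
  exact isUnit_of_dvd_X_sub_C_mul_comp hp (a := 1 * α) (b := 2 * α) (c := 1) (d := 2)
    (by simpa [eq_comm, two_mul] using hα) (by norm_num) (by norm_num)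
    (by exact_mod_cast hdvd 1) (by exact_mod_cast hdvd 2)

theorem virL_zero (lam α : ℂ) (f : ℂ[X]) : virL lam α 0 f = X * f := by
  simp [virL]

theorem virL_eq_C_mul (lam α : ℂ) (i : ℤ) (f : ℂ[X]) :
    virL lam α i f = C (lam ^ i) * ((X - C ((i : ℂ) * α)) * f.comp (X - C (i : ℂ))) :=
  mul_assoc _ _ _

/-- for `λ ≠ 0` and `α ≠ 0`, the Virasoro module `Ω_Vir(λ, α) = ℂ[t]`
is simple: every subspace invariant under all the `L_i` is `0` or everything. -/
theorem stmt_5 (lam α : ℂ) (hlam : lam ≠ 0) (hα : α ≠ 0) :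
    ∀ N : Submodule ℂ ℂ[X],
      (∀ (i : ℤ) (f : ℂ[X]), f ∈ N → virL lam α i f ∈ N) → N = ⊥ ∨ N = ⊤ := by
  intro N hN
  obtain ⟨I, rfl⟩ := N.exists_ideal_restrictScalars_eq_of_X_mul_mem fun f hf => by
    simpa [virL_zero] using hN 0 f hf
  have hI : ∀ (i : ℤ) (f : ℂ[X]), f ∈ I →
      (X - C ((i : ℂ) * α)) * f.comp (X - C (i : ℂ)) ∈ I := fun i f hf => by
    have := hN i f hf
    rwa [Submodule.restrictScalars_mem, virL_eq_C_mul,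
      Ideal.unit_mul_mem_iff_mem _ (isUnit_C.mpr ((zpow_ne_zero i hlam).isUnit))] at this
  simpa only [Submodule.restrictScalars_eq_bot_iff, Submodule.restrictScalars_eq_top_iff]
    using I.eq_bot_or_eq_top_of_X_sub_C_mul_comp_mem hα hI
end

section
/- Let λ ∈ ℂ*. The Vir-module Ω_Vir(λ, 0) = ℂ[t] with action L_i · f(t) = λ^i t f(t − i) has t·ℂ[t] as a proper submodule, the map f(t) ↦ t f(t) is a Vir-module isomorphism from Ω_Vir(λ, 1) onto t·ℂ[t], and the quotient Ω_Vir(λ,0)/tΩ_Vir(λ,0) is a one-dimensional module on which every L_i acts as zero. -/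
open Polynomial

/-- The subspace `t·ℂ[t]` of `ℂ[t]`, i.e. the range of multiplication by `X`. -/
noncomputable def tPoly : Submodule ℂ ℂ[X] :=
  LinearMap.range (LinearMap.mulLeft ℂ (X : ℂ[X]))

lemma mem_tPoly_iff (f : ℂ[X]) : f ∈ tPoly ↔ ∃ g, X * g = f := Iff.rfl

lemma mem_tPoly_iff_eval (f : ℂ[X]) : f ∈ tPoly ↔ f.eval 0 = 0 := by
  constructor
  · rintro ⟨g, rfl⟩
    simp [LinearMap.mulLeft_apply]
  · intro h
    refine ⟨f.divByMonic X, ?_⟩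
    have := Polynomial.modByMonic_add_div f (X : ℂ[X])
    have hmod : f %ₘ X = 0 := by
      rw [Polynomial.modByMonic_X, h, map_zero]
    simpa [LinearMap.mulLeft_apply, hmod] using this

/-- `Ω_Vir(λ, 0)` has `t·ℂ[t]` as a proper submodule, `f ↦ t f` is a
Vir-module isomorphism from `Ω_Vir(λ, 1)` onto `t·ℂ[t]` (it is injective, has range
`t·ℂ[t]`, and intertwines the actions), and the quotient `ℂ[t]/t·ℂ[t]` is
one-dimensional with every `L_i` acting as zero. -/
theorem stmt_6 (lam : ℂ) (hlam : lam ≠ 0) :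
    (∀ (i : ℤ) (f : ℂ[X]), f ∈ tPoly → virL lam 0 i f ∈ tPoly) ∧
    tPoly ≠ ⊤ ∧
    (Function.Injective fun f : ℂ[X] => X * f) ∧
    (∀ (i : ℤ) (f : ℂ[X]), X * virL lam 1 i f = virL lam 0 i (X * f)) ∧
    Module.finrank ℂ (ℂ[X] ⧸ tPoly) = 1 ∧
    (∀ (i : ℤ) (f : ℂ[X]), virL lam 0 i f ∈ tPoly) := by
  have hall : ∀ (i : ℤ) (f : ℂ[X]), virL lam 0 i f ∈ tPoly := by
    intro i f
    refine ⟨C (lam ^ i) * f.comp (X - C (i : ℂ)), ?_⟩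
    simp only [LinearMap.mulLeft_apply, virL, mul_zero, mul_one, Polynomial.C_0, map_zero]
    ring
  have hone : (1 : ℂ[X]) ∉ tPoly := by
    rw [mem_tPoly_iff_eval]; simp
  refine ⟨fun i f _ => hall i f, ?_, ?_, ?_, ?_, hall⟩
  · intro h
    exact hone (h ▸ Submodule.mem_top)
  · intro f g h
    simp only at h
    exact mul_left_cancel₀ (Polynomial.X_ne_zero) h
  · intro i f
    simp only [virL, mul_comm, mul_one, Polynomial.mul_comp, Polynomial.X_comp, mul_zero, mul_one, Polynomial.C_0, map_zero]
    ring
  · have hv : (Submodule.Quotient.mk (1 : ℂ[X]) : ℂ[X] ⧸ tPoly) ≠ 0 := by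
      intro h
      exact hone ((Submodule.Quotient.mk_eq_zero _).mp h)
    rw [finrank_eq_one_iff_of_nonzero' _ hv]
    intro w
    obtain ⟨f, rfl⟩ := Submodule.Quotient.mk_surjective _ w
    refine ⟨f.eval 0, ?_⟩
    rw [← Submodule.Quotient.mk_smul, Submodule.Quotient.eq]
    rw [mem_tPoly_iff_eval]
    simp [Polynomial.smul_eval]
end

section
/- The vector space with basis {L_{i,m} : i ∈ ℤ, m ∈ ℕ} and bracket [L_{i,m}, L_{j,n}] = (j−i)L_{i+j,m+n} + ε(m−n)L_{i+j,m+n−ε} (for ε = 1, interpreting L_{i+j,−1} = 0 when m = n = 0) is a Lie algebra: the bracket is antisymmetric and satisfies the Jacobi identity. -/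
local notation "A" => AddMonoidAlgebra ℂ (ℤ × ℤ)

noncomputable def Dmap : A →ₗ[ℂ] A :=
  Finsupp.lsum ℂ (fun p => LinearMap.toSpanSingleton ℂ A
    ((p.1 : ℂ) • AddMonoidAlgebra.single p (1:ℂ) - (p.2 : ℂ) • AddMonoidAlgebra.single (p.1, p.2 - 1) (1:ℂ))) ∘ₗ (AddMonoidAlgebra.coeffLinearEquiv ℂ).toLinearMap

lemma Dmap_single (p : ℤ × ℤ) (c : ℂ) :
    Dmap (AddMonoidAlgebra.single p c) =
      c • ((p.1 : ℂ) • AddMonoidAlgebra.single p (1:ℂ) - (p.2 : ℂ) • AddMonoidAlgebra.single (p.1, p.2 - 1) (1:ℂ)) := by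
  simp only [Dmap, LinearMap.coe_comp, Function.comp_apply, LinearEquiv.coe_coe, AddMonoidAlgebra.coeffLinearEquiv_apply, AddMonoidAlgebra.coeff_single, Finsupp.lsum_single, LinearMap.toSpanSingleton_apply]

lemma Dmap_mul (a b : A) : Dmap (a * b) = a * Dmap b + Dmap a * b := by
  induction a using AddMonoidAlgebra.induction_linear with
  | zero => simp
  | add f g hf hg => simp only [add_mul, map_add, hf, hg]; ring
  | single p c =>
    induction b using AddMonoidAlgebra.induction_linear with
    | zero => simp
    | add f g hf hg => simp only [mul_add, map_add, hf, hg]; ring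
    | single q d =>
      rw [show (AddMonoidAlgebra.single p c * AddMonoidAlgebra.single q d : A)
          = AddMonoidAlgebra.single (p + q) (c * d) from AddMonoidAlgebra.single_mul_single ..]
      rw [Dmap_single, Dmap_single, Dmap_single]
      simp only [mul_sub, sub_mul, mul_smul_comm, smul_mul_assoc]
      rw [show ((AddMonoidAlgebra.single p c : A) * AddMonoidAlgebra.single q (1:ℂ))
          = AddMonoidAlgebra.single (p + q) (c * 1) from AddMonoidAlgebra.single_mul_single ..]
      rw [show ((AddMonoidAlgebra.single p c : A) * AddMonoidAlgebra.single (q.1, q.2-1) (1:ℂ))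
          = AddMonoidAlgebra.single (p + (q.1, q.2-1)) (c * 1) from AddMonoidAlgebra.single_mul_single ..]
      rw [show ((AddMonoidAlgebra.single p (1:ℂ) : A) * AddMonoidAlgebra.single q d)
          = AddMonoidAlgebra.single (p + q) (1 * d) from AddMonoidAlgebra.single_mul_single ..]
      rw [show ((AddMonoidAlgebra.single (p.1, p.2-1) (1:ℂ) : A) * AddMonoidAlgebra.single q d)
          = AddMonoidAlgebra.single ((p.1, p.2-1) + q) (1 * d) from AddMonoidAlgebra.single_mul_single ..]
      rw [show p + (q.1, q.2 - 1) = ((p + q).1, (p + q).2 - 1) from by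
        simp [Prod.ext_iff]; ring]
      rw [show (p.1, p.2 - 1) + q = ((p + q).1, (p + q).2 - 1) from by
        simp [Prod.ext_iff]; ring]
      rw [← AddMonoidAlgebra.smul_single' c (p + q) (1:ℂ),
        ← AddMonoidAlgebra.smul_single' c ((p + q).1, (p + q).2 - 1) (1:ℂ),
        show (1:ℂ) * d = d * 1 from by ring, ← AddMonoidAlgebra.smul_single' d (p + q) (1:ℂ),
        ← AddMonoidAlgebra.smul_single' d ((p + q).1, (p + q).2 - 1) (1:ℂ)]
      simp only [Prod.fst_add, Prod.snd_add, Int.cast_add]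
      module

/-- The bracket of `W(1)` on the free vector space with basis `{L_{i,m} : i ∈ ℤ, m ∈ ℕ}`:
`[L_{i,m}, L_{j,n}] = (j-i) L_{i+j,m+n} + (m-n) L_{i+j,m+n-1}` (the second term vanishes
when `m = n`, so no negative second index ever occurs). -/
noncomputable def W1bracket (x y : (ℤ × ℕ) →₀ ℂ) : (ℤ × ℕ) →₀ ℂ :=
  x.sum fun p a => y.sum fun q b =>
    (a * b) • (((q.1 - p.1 : ℤ) : ℂ) • Finsupp.single (p.1 + q.1, p.2 + q.2) (1 : ℂ) +
      (((p.2 : ℤ) - (q.2 : ℤ) : ℤ) : ℂ) • Finsupp.single (p.1 + q.1, p.2 + q.2 - 1) (1 : ℂ))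

lemma W1bracket_add_left (x x' y : (ℤ × ℕ) →₀ ℂ) :
    W1bracket (x + x') y = W1bracket x y + W1bracket x' y := by
  unfold W1bracket
  rw [Finsupp.sum_add_index']
  · intro p; simp
  · intro p a a'
    rw [← Finsupp.sum_add]
    congr 1; ext q b
    rw [add_mul, add_smul]

lemma W1bracket_add_right (x y y' : (ℤ × ℕ) →₀ ℂ) :
    W1bracket x (y + y') = W1bracket x y + W1bracket x y' := by
  unfold W1bracket
  rw [← Finsupp.sum_add]
  congr 1; ext p a
  rw [Finsupp.sum_add_index']
  · intro q; simp
  · intro q b b'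
    rw [mul_add, add_smul]

lemma W1bracket_zero_left (y : (ℤ × ℕ) →₀ ℂ) : W1bracket 0 y = 0 := by
  unfold W1bracket; simp

lemma W1bracket_zero_right (x : (ℤ × ℕ) →₀ ℂ) : W1bracket x 0 = 0 := by
  unfold W1bracket; simp

lemma W1bracket_single_single (p q : ℤ × ℕ) (a b : ℂ) :
    W1bracket (Finsupp.single p a) (Finsupp.single q b) =
      (a * b) • (((q.1 - p.1 : ℤ) : ℂ) • Finsupp.single (p.1 + q.1, p.2 + q.2) (1 : ℂ) +
        (((p.2 : ℤ) - (q.2 : ℤ) : ℤ) : ℂ) • Finsupp.single (p.1 + q.1, p.2 + q.2 - 1) (1 : ℂ)) := by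
  unfold W1bracket
  rw [Finsupp.sum_single_index, Finsupp.sum_single_index]
  · simp
  · simp [Finsupp.sum]

noncomputable def iota : ((ℤ × ℕ) →₀ ℂ) →ₗ[ℂ] AddMonoidAlgebra ℂ (ℤ × ℤ) :=
  (AddMonoidAlgebra.coeffLinearEquiv ℂ).symm.toLinearMap ∘ₗ Finsupp.lmapDomain ℂ ℂ (Prod.map id (Nat.cast : ℕ → ℤ))

lemma iota_inj : Function.Injective iota := by
  show Function.Injective ((AddMonoidAlgebra.coeffLinearEquiv ℂ).symm ∘ Finsupp.mapDomain (Prod.map id (Nat.cast : ℕ → ℤ)))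
  apply (AddMonoidAlgebra.coeffLinearEquiv ℂ).symm.injective.comp
  apply Finsupp.mapDomain_injective
  intro u v h
  have h1 := congrArg Prod.fst h
  have h2 := congrArg Prod.snd h
  simp [Prod.map] at h1 h2
  exact Prod.ext h1 h2

lemma iota_single (p : ℤ × ℕ) (c : ℂ) :
    iota (Finsupp.single p c) = AddMonoidAlgebra.single (p.1, (p.2 : ℤ)) c := by
  show (AddMonoidAlgebra.coeffLinearEquiv ℂ).symm (Finsupp.mapDomain (Prod.map id (Nat.cast : ℕ → ℤ)) (Finsupp.single p c)) = _
  rw [Finsupp.mapDomain_single]; rfl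

noncomputable def brA (f g : AddMonoidAlgebra ℂ (ℤ × ℤ)) : AddMonoidAlgebra ℂ (ℤ × ℤ) :=
  f * Dmap g - Dmap f * g

lemma brA_jacobi (f g h : AddMonoidAlgebra ℂ (ℤ × ℤ)) :
    brA f (brA g h) + brA g (brA h f) + brA h (brA f g) = 0 := by
  unfold brA; simp only [map_sub, Dmap_mul]; ring

lemma iota_bracket (x y : (ℤ × ℕ) →₀ ℂ) :
    iota (W1bracket x y) = brA (iota x) (iota y) := by
  induction x using Finsupp.induction_linear with
  | zero => simp [W1bracket_zero_left, brA]
  | add f g hf hg =>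
    rw [W1bracket_add_left, map_add, hf, hg, map_add]; unfold brA; simp only [map_add]; ring
  | single p a =>
    induction y using Finsupp.induction_linear with
    | zero => simp [W1bracket_zero_right, brA]
    | add f g hf hg =>
      rw [W1bracket_add_right, map_add, hf, hg, map_add]; unfold brA; simp only [map_add]; ring
    | single q b =>
      rw [W1bracket_single_single, map_smul, map_add, map_smul, map_smul,
        iota_single, iota_single, iota_single, iota_single]
      unfold brA
      rw [Dmap_single, Dmap_single]
      simp only [mul_sub, sub_mul, mul_smul_comm, smul_mul_assoc]
      rw [show ((AddMonoidAlgebra.single (p.1, (p.2:ℤ)) a : AddMonoidAlgebra ℂ (ℤ × ℤ)) *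
            AddMonoidAlgebra.single (q.1, (q.2:ℤ)) (1:ℂ))
          = AddMonoidAlgebra.single ((p.1, (p.2:ℤ)) + (q.1, (q.2:ℤ))) (a * 1) from
          AddMonoidAlgebra.single_mul_single ..]
      rw [show ((AddMonoidAlgebra.single (p.1, (p.2:ℤ)) a : AddMonoidAlgebra ℂ (ℤ × ℤ)) *
            AddMonoidAlgebra.single (q.1, (q.2:ℤ) - 1) (1:ℂ))
          = AddMonoidAlgebra.single ((p.1, (p.2:ℤ)) + (q.1, (q.2:ℤ) - 1)) (a * 1) from
          AddMonoidAlgebra.single_mul_single ..]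
      rw [show ((AddMonoidAlgebra.single (p.1, (p.2:ℤ)) (1:ℂ) : AddMonoidAlgebra ℂ (ℤ × ℤ)) *
            AddMonoidAlgebra.single (q.1, (q.2:ℤ)) b)
          = AddMonoidAlgebra.single ((p.1, (p.2:ℤ)) + (q.1, (q.2:ℤ))) (1 * b) from
          AddMonoidAlgebra.single_mul_single ..]
      rw [show ((AddMonoidAlgebra.single (p.1, (p.2:ℤ) - 1) (1:ℂ) : AddMonoidAlgebra ℂ (ℤ × ℤ)) *
            AddMonoidAlgebra.single (q.1, (q.2:ℤ)) b)
          = AddMonoidAlgebra.single ((p.1, (p.2:ℤ) - 1) + (q.1, (q.2:ℤ))) (1 * b) from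
          AddMonoidAlgebra.single_mul_single ..]
      rw [show ((p.1, (p.2:ℤ)) + (q.1, (q.2:ℤ) - 1)) = (p.1 + q.1, (p.2:ℤ) + q.2 - 1) from by
        simp [Prod.ext_iff]; ring]
      rw [show ((p.1, (p.2:ℤ) - 1) + (q.1, (q.2:ℤ))) = (p.1 + q.1, (p.2:ℤ) + q.2 - 1) from by
        simp [Prod.ext_iff]; ring]
      rw [show ((p.1, (p.2:ℤ)) + (q.1, (q.2:ℤ))) = (p.1 + q.1, (p.2:ℤ) + q.2) from rfl]
      rw [← AddMonoidAlgebra.smul_single' a (p.1 + q.1, (p.2:ℤ) + q.2) (1:ℂ),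
        ← AddMonoidAlgebra.smul_single' a (p.1 + q.1, (p.2:ℤ) + q.2 - 1) (1:ℂ),
        show (1:ℂ) * b = b * 1 from by ring,
        ← AddMonoidAlgebra.smul_single' b (p.1 + q.1, (p.2:ℤ) + q.2) (1:ℂ),
        ← AddMonoidAlgebra.smul_single' b (p.1 + q.1, (p.2:ℤ) + q.2 - 1) (1:ℂ)]
      by_cases hmn : p.2 = q.2
      · rw [hmn]
        simp only [sub_self, Int.cast_zero, zero_smul, smul_zero, add_zero, sub_zero]
        rw [show ((q.2 + q.2 : ℕ) : ℤ) = (q.2 : ℤ) + q.2 from by push_cast; ring]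
        module
      · rw [show ((p.2 + q.2 - 1 : ℕ) : ℤ) = (p.2 : ℤ) + q.2 - 1 from by omega,
          show ((p.2 + q.2 : ℕ) : ℤ) = (p.2 : ℤ) + q.2 from by push_cast; ring]
        push_cast
        module

/-- the bracket of `W(1)` is antisymmetric and satisfies the Jacobi
identity, so `W(1)` is a Lie algebra. -/
theorem stmt_8 :
    (∀ x y : (ℤ × ℕ) →₀ ℂ, W1bracket x y = -W1bracket y x) ∧
    (∀ x y z : (ℤ × ℕ) →₀ ℂ,
      W1bracket x (W1bracket y z) + W1bracket y (W1bracket z x) +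
        W1bracket z (W1bracket x y) = 0) := by
  constructor
  · intro x y
    apply iota_inj
    rw [map_neg, iota_bracket, iota_bracket]
    unfold brA; ring
  · intro x y z
    apply iota_inj
    rw [map_add, map_add, iota_bracket, iota_bracket, iota_bracket, iota_bracket,
      iota_bracket, iota_bracket, map_zero]
    exact brA_jacobi _ _ _
end

section
/- Let λ ∈ ℂ*, α, β ∈ ℂ. Define operators on ℂ[t] by L_{i,0}·t^k = λ^i(t−iα)(t−i)^k and L_{i,1}·t^k = λ^i(α − iαβ + βt)(t−i)^k + kλ^i(t−iα)(t−i)^{k−1} (the last term absent for k = 0). Then [L_{i,0}, L_{j,1}] acting as (j−i)L_{i+j,1} − L_{i+j,0} satisfies [L_{i,0}, L_{j,1}]·t^k = L_{i,0}·L_{j,1}·t^k − L_{j,1}·L_{i,0}·t^k for all i, j ∈ ℤ, k ∈ ℕ. -/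
open Polynomial

/-!
By linearity, the monomial formulas say that `L_{i,0} p = λ^i (t - iα) p(t - i)` and
`L_{i,1} p = λ^i (α - iαβ + βt) p(t - i) + λ^i (t - iα) p'(t - i)` for every polynomial `p`.
In this closed form the shifts compose additively, `(p(t - j))' = p'(t - j)`, and `λ^i λ^j = λ^(i+j)`
since `λ ≠ 0`; the commutator relation becomes an identity between polynomial expressions in
`t`, `p(t - i - j)` and `p'(t - i - j)`.
-/

namespace Polynomial

variable {R : Type*} [CommRing R]

theorem apply_eq_mul_comp_of_apply_X_pow {L : R[X] →ₗ[R] R[X]} {f q : R[X]}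
    (hL : ∀ k : ℕ, L (X ^ k) = f * q ^ k) (p : R[X]) : L p = f * p.comp q := by
  induction p using Polynomial.induction_on' with
  | add p r hp hr => rw [map_add, hp, hr, add_comp, mul_add]
  | monomial n a => rw [← smul_X_eq_monomial, map_smul, hL, smul_comp, X_pow_comp, mul_smul_comm]

theorem apply_eq_mul_comp_add_mul_derivative_comp_of_apply_X_pow {L : R[X] →ₗ[R] R[X]}
    {f g q : R[X]} (hL : ∀ k : ℕ, L (X ^ k) = f * q ^ k + (k : R) • (g * q ^ (k - 1)))
    (p : R[X]) : L p = f * p.comp q + g * (derivative p).comp q := by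
  induction p using Polynomial.induction_on' with
  | add p r hp hr => rw [map_add, hp, hr, map_add, add_comp, add_comp]; ring
  | monomial n a =>
    rw [← smul_X_eq_monomial, map_smul, hL, derivative_smul, derivative_X_pow, smul_comp,
      smul_comp, mul_comp, C_comp, X_pow_comp, X_pow_comp, smul_eq_C_mul, smul_eq_C_mul,
      smul_eq_C_mul, smul_eq_C_mul]
    ring

theorem comp_X_sub_C_comp_X_sub_C_s10 (p : R[X]) (a b : R) :
    (p.comp (X - C a)).comp (X - C b) = p.comp (X - C (a + b)) := by
  rw [comp_assoc, sub_comp, X_comp, C_comp, C_add]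
  ring_nf

end Polynomial

namespace W1

variable {K : Type*} [Field K] (lam α β : K)

noncomputable def L0 (i : ℤ) (p : K[X]) : K[X] :=
  C (lam ^ i) * (X - C (i * α)) * p.comp (X - C (i : K))

noncomputable def L1 (i : ℤ) (p : K[X]) : K[X] :=
  C (lam ^ i) * (C (α - i * α * β) + C β * X) * p.comp (X - C (i : K))
    + C (lam ^ i) * (X - C (i * α)) * (derivative p).comp (X - C (i : K))

theorem derivative_L0 (i : ℤ) (p : K[X]) :
    derivative (L0 lam α i p) =
      C (lam ^ i) * p.comp (X - C (i : K))
        + C (lam ^ i) * (X - C (i * α)) * (derivative p).comp (X - C (i : K)) := by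
  simp only [L0, derivative_mul, derivative_C, derivative_X_sub_C, derivative_comp]
  ring

theorem L0_L1_sub_L1_L0 (hlam : lam ≠ 0) (i j : ℤ) (p : K[X]) :
    L0 lam α i (L1 lam α β j p) - L1 lam α β j (L0 lam α i p) =
      ((j - i : ℤ) : K) • L1 lam α β (i + j) p - L0 lam α (i + j) p := by
  simp only [L1, derivative_L0]
  simp only [L0, add_comp, mul_comp, C_comp, X_comp, sub_comp, comp_X_sub_C_comp_X_sub_C_s10,
    zpow_add₀ hlam, smul_eq_C_mul]
  -- `ring` cannot look inside `comp`, so both shifts must be written the same way.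
  rw [add_comm (j : K) (i : K)]
  push_cast [C_add, C_sub, C_mul]
  ring

end W1

/-- if linear operators `L0 i = L_{i,0}` and `L1 i = L_{i,1}` on `ℂ[t]`
act on monomials by `L_{i,0}·t^k = λ^i(t-iα)(t-i)^k` and
`L_{i,1}·t^k = λ^i(α - iαβ + βt)(t-i)^k + kλ^i(t-iα)(t-i)^{k-1}`,
then `[L_{i,0}, L_{j,1}]·t^k = (j-i)L_{i+j,1}·t^k - L_{i+j,0}·t^k
 = L_{i,0}·L_{j,1}·t^k - L_{j,1}·L_{i,0}·t^k`. -/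
theorem stmt_10 (lam α β : ℂ) (hlam : lam ≠ 0)
    (L0 L1 : ℤ → ℂ[X] →ₗ[ℂ] ℂ[X])
    (hL0 : ∀ (i : ℤ) (k : ℕ),
      L0 i (X ^ k) = C (lam ^ i) * (X - C ((i : ℂ) * α)) * (X - C (i : ℂ)) ^ k)
    (hL1 : ∀ (i : ℤ) (k : ℕ),
      L1 i (X ^ k) = C (lam ^ i) * (C (α - (i : ℂ) * α * β) + C β * X) * (X - C (i : ℂ)) ^ k
        + (k : ℂ) • (C (lam ^ i) * (X - C ((i : ℂ) * α)) * (X - C (i : ℂ)) ^ (k - 1))) :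
    ∀ (i j : ℤ) (k : ℕ),
      ((j - i : ℤ) : ℂ) • L1 (i + j) (X ^ k) - L0 (i + j) (X ^ k) =
        L0 i (L1 j (X ^ k)) - L1 j (L0 i (X ^ k)) := by
  have hL0_eq (i : ℤ) (p : ℂ[X]) : L0 i p = W1.L0 lam α i p :=
    apply_eq_mul_comp_of_apply_X_pow (hL0 i) p
  have hL1_eq (i : ℤ) (p : ℂ[X]) : L1 i p = W1.L1 lam α β i p :=
    apply_eq_mul_comp_add_mul_derivative_comp_of_apply_X_pow (hL1 i) p
  intro i j k
  simp only [hL0_eq, hL1_eq]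
  exact (W1.L0_L1_sub_L1_L0 lam α β hlam i j (X ^ k)).symm
end

section
/- Let λ ∈ ℂ*, α, β ∈ ℂ, and suppose M = ℂ[t] is a W(1)-module with L_{0,0}·f(t) = t f(t) such that [L_{i,m}, L_{j,n}]·v = L_{i,m}·L_{j,n}·v − L_{j,n}·L_{i,m}·v. Then for all i ∈ ℤ, m, k ∈ ℕ: L_{i,m}·t^k = ∑_{s=0}^{min(m,k)} s!·binom(m,s)·binom(k,s)·(t−i)^{k−s}·(L_{i,m−s}·1). -/
/-!
Bracketing with `L_{0,0}` gives `L_{i,m}(t f) = (t - i) L_{i,m} f + m L_{i,m-1} f`, a relation that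
involves only the operators `L_{i,•}` for fixed `i`. Any family `D_m` satisfying
`D_m(x v) = (x - a) D_m v + m D_{m-1} v` expands `D_m(x^k)` by induction on `k`: the coefficient
`m^{(s)} C(k,s)` (falling factorial `m^{(s)} = s! C(m,s)`) obeys the Pascal-type recursion
`m^{(s+1)} C(k+1,s+1) = m^{(s+1)} C(k,s+1) + m (m-1)^{(s)} C(k,s)`.
-/

open Polynomial Finset

theorem Nat.descFactorial_succ_mul_choose_succ_succ (m k s : ℕ) :
    m.descFactorial (s + 1) * (k + 1).choose (s + 1) =
      m.descFactorial (s + 1) * k.choose (s + 1) + m * ((m - 1).descFactorial s * k.choose s) := by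
  rw [Nat.choose_succ_succ]
  cases m with
  | zero => simp
  | succ n => rw [Nat.succ_descFactorial_succ, Nat.add_sub_cancel]; ring

section Ladder

variable {A M : Type*} [Ring A] [AddCommGroup M] [Module A M] (D : ℕ → A → M) (x a : A)

def ladderTerm (m k s : ℕ) : M :=
  (m.descFactorial s * k.choose s) • ((x - a) ^ (k - s) • D (m - s) 1)

lemma ladderTerm_eq_zero {m k s : ℕ} (h : min m k < s) : ladderTerm D x a m k s = 0 := by
  rcases min_lt_iff.mp h with hm | hk
  · simp [ladderTerm, Nat.descFactorial_eq_zero_iff_lt.mpr hm]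
  · simp [ladderTerm, Nat.choose_eq_zero_of_lt hk]

lemma ladderTerm_succ_zero (m k : ℕ) :
    ladderTerm D x a m (k + 1) 0 = (x - a) • ladderTerm D x a m k 0 := by
  simp [ladderTerm, pow_succ', mul_smul]

lemma ladderTerm_succ_succ (m k s : ℕ) :
    ladderTerm D x a m (k + 1) (s + 1) =
      (x - a) • ladderTerm D x a m k (s + 1) + m • ladderTerm D x a (m - 1) k s := by
  have hm : m - 1 - s = m - (s + 1) := by omega
  rcases Nat.lt_or_ge k (s + 1) with hk | hk
  · simp only [ladderTerm, Nat.choose_eq_zero_of_lt hk, mul_zero, zero_smul, smul_zero, zero_add,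
      Nat.add_sub_add_right, Nat.sub_eq_zero_of_le (Nat.lt_succ_iff.mp hk), hm, smul_smul,
      Nat.descFactorial_succ_mul_choose_succ_succ]
  · have hpow : (x - a) ^ (k - s) = (x - a) * (x - a) ^ (k - (s + 1)) := by
      rw [← pow_succ']; congr 1; omega
    simp only [ladderTerm, Nat.add_sub_add_right, hm, hpow, Nat.descFactorial_succ_mul_choose_succ_succ,
      add_smul, mul_smul, smul_comm (x - a) (_ : ℕ)]

variable {D x a}

theorem apply_pow_eq_sum_ladderTerm_of_lt
    (hD : ∀ m v, D m (x * v) = (x - a) • D m v + m • D (m - 1) v) (k : ℕ) :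
    ∀ m N, k < N → D m (x ^ k) = ∑ s ∈ range N, ladderTerm D x a m k s := by
  induction k with
  | zero =>
    rintro m (_ | N) hN
    · omega
    · rw [sum_range_succ']
      simp [ladderTerm, Nat.choose_eq_zero_of_lt]
  | succ k ih =>
    rintro m (_ | N) hN
    · omega
    · rw [sum_range_succ', pow_succ', hD, ih m (N + 1) (by omega), ih (m - 1) N (by omega),
        sum_range_succ', smul_add, smul_sum, smul_sum, ladderTerm_succ_zero]
      simp only [ladderTerm_succ_succ, sum_add_distrib]
      abel

theorem apply_pow_eq_sum_ladderTerm
    (hD : ∀ m v, D m (x * v) = (x - a) • D m v + m • D (m - 1) v) (m k : ℕ) :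
    D m (x ^ k) = ∑ s ∈ range (min m k + 1), ladderTerm D x a m k s := by
  rw [apply_pow_eq_sum_ladderTerm_of_lt hD k m (k + 1) k.lt_succ_self]
  refine (sum_subset (fun s hs => ?_) fun s _ hs => ladderTerm_eq_zero D x a ?_).symm
  · simp only [mem_range] at hs ⊢; omega
  · simp only [mem_range, not_lt] at hs; omega

end Ladder

theorem stmt_12_general
    (ρ : ℤ → ℕ → ℂ[X] →ₗ[ℂ] ℂ[X])
    (h00 : ∀ f : ℂ[X], ρ 0 0 f = X * f)
    (hbr : ∀ (i j : ℤ) (m n : ℕ) (v : ℂ[X]),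
      ρ i m (ρ j n v) - ρ j n (ρ i m v) =
        ((j - i : ℤ) : ℂ) • ρ (i + j) (m + n) v +
          (((m : ℤ) - (n : ℤ) : ℤ) : ℂ) • ρ (i + j) (m + n - 1) v) :
    ∀ (i : ℤ) (m k : ℕ),
      ρ i m (X ^ k) = ∑ s ∈ Finset.range (min m k + 1),
        ((s.factorial * m.choose s * k.choose s : ℕ) : ℂ) •
          ((X - C (i : ℂ)) ^ (k - s) * ρ i (m - s) 1) := by
  intro i m k
  have hladder : ∀ (m : ℕ) (v : ℂ[X]),
      ρ i m (X * v) = (X - C (i : ℂ)) • ρ i m v + m • ρ i (m - 1) v := by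
    intro m v
    have h := hbr i 0 m 0 v
    simp only [h00, add_zero, Nat.cast_zero, sub_zero, zero_sub, Int.cast_neg,
      Int.cast_natCast, neg_smul] at h
    rw [smul_eq_mul, sub_mul, ← smul_eq_C_mul, ← Nat.cast_smul_eq_nsmul ℂ]
    linear_combination h
  rw [apply_pow_eq_sum_ladderTerm hladder]
  refine sum_congr rfl fun s _ => ?_
  rw [ladderTerm, ← Nat.descFactorial_eq_factorial_mul_choose, Nat.cast_smul_eq_nsmul, smul_eq_mul]

/-- suppose `ρ i m` is the action of `L_{i,m}` of `W(1)` on `M = ℂ[t]`,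
compatible with the bracket `[L_{i,m}, L_{j,n}] = (j-i)L_{i+j,m+n} + (m-n)L_{i+j,m+n-1}`,
and `L_{0,0}` acts by multiplication by `t`. Then
`L_{i,m}·t^k = ∑_{s=0}^{min(m,k)} s!·C(m,s)·C(k,s)·(t-i)^{k-s}·(L_{i,m-s}·1)`. -/
theorem stmt_12 (lam α β : ℂ) (hlam : lam ≠ 0)
    (ρ : ℤ → ℕ → ℂ[X] →ₗ[ℂ] ℂ[X])
    (h00 : ∀ f : ℂ[X], ρ 0 0 f = X * f)
    (hbr : ∀ (i j : ℤ) (m n : ℕ) (v : ℂ[X]),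
      ρ i m (ρ j n v) - ρ j n (ρ i m v) =
        ((j - i : ℤ) : ℂ) • ρ (i + j) (m + n) v +
          (((m : ℤ) - (n : ℤ) : ℤ) : ℂ) • ρ (i + j) (m + n - 1) v) :
    ∀ (i : ℤ) (m k : ℕ),
      ρ i m (X ^ k) = ∑ s ∈ Finset.range (min m k + 1),
        ((s.factorial * m.choose s * k.choose s : ℕ) : ℂ) •
          ((X - C (i : ℂ)) ^ (k - s) * ρ i (m - s) 1) :=
  stmt_12_general ρ h00 hbr
end

section
/- Let λ ∈ ℂ*, β ∈ ℂ, i ∈ ℤ, m, k ∈ ℕ. Then the following polynomial identity holds in ℂ[t]: ∑_{s=0}^{min(m,k)} s! binom(m,s) binom(k,s) β^{m−s−1}(β(t−i) + (m−s))(t−i)^{k−s} = ∑_{s=0}^{min(m,k+1)} s! binom(m,s) binom(k+1,s) β^{m−s}(t−i)^{k−s+1}, where if s = m and β = 0 the factor β^{−1}(β(t−i)+0) is read as (t−i). -/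
open Polynomial

/-- the polynomial identity in `ℂ[t]`
`∑_{s=0}^{min(m,k)} s! C(m,s) C(k,s) β^{m-s-1}(β(t-i) + (m-s))(t-i)^{k-s}
  = ∑_{s=0}^{min(m,k+1)} s! C(m,s) C(k+1,s) β^{m-s}(t-i)^{k+1-s}`,
where for `s = m` the factor `β^{m-s-1}(β(t-i) + 0)` is read as `(t-i)`; accordingly
each left-hand term is written as `β^{m-s}(t-i)^{k-s+1} + (m-s)β^{m-s-1}(t-i)^{k-s}`
(the second summand having coefficient `0` when `s = m`). -/
theorem stmt_14 (β : ℂ) (i : ℤ) (m k : ℕ) :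
    ∑ s ∈ Finset.range (min m k + 1),
      C ((s.factorial * m.choose s * k.choose s : ℕ) : ℂ) *
        (C (β ^ (m - s)) * (X - C (i : ℂ)) ^ (k + 1 - s) +
          C (((m - s : ℕ) : ℂ) * β ^ (m - s - 1)) * (X - C (i : ℂ)) ^ (k - s)) =
    ∑ s ∈ Finset.range (min m (k + 1) + 1),
      C ((s.factorial * m.choose s * (k + 1).choose s : ℕ) : ℂ) *
        (C (β ^ (m - s)) * (X - C (i : ℂ)) ^ (k + 1 - s)) := by
  set Y : ℂ[X] := X - C (i : ℂ) with hY
  have hL : (∑ s ∈ Finset.range (min m k + 1),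
      C ((s.factorial * m.choose s * k.choose s : ℕ) : ℂ) *
        (C (β ^ (m - s)) * Y ^ (k + 1 - s) +
          C (((m - s : ℕ) : ℂ) * β ^ (m - s - 1)) * Y ^ (k - s)))
      = ∑ s ∈ Finset.range (m + 1),
      C ((s.factorial * m.choose s * k.choose s : ℕ) : ℂ) *
        (C (β ^ (m - s)) * Y ^ (k + 1 - s) +
          C (((m - s : ℕ) : ℂ) * β ^ (m - s - 1)) * Y ^ (k - s)) := by
    apply Finset.sum_subset
    · intro x hx
      simp only [Finset.mem_range] at *
      omega
    · intro x hx hnx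
      simp only [Finset.mem_range] at hx hnx
      have hk : k < x := by omega
      simp [Nat.choose_eq_zero_of_lt hk]
  have hR : (∑ s ∈ Finset.range (min m (k + 1) + 1),
      C ((s.factorial * m.choose s * (k + 1).choose s : ℕ) : ℂ) *
        (C (β ^ (m - s)) * Y ^ (k + 1 - s)))
      = ∑ s ∈ Finset.range (m + 1),
      C ((s.factorial * m.choose s * (k + 1).choose s : ℕ) : ℂ) *
        (C (β ^ (m - s)) * Y ^ (k + 1 - s)) := by
    apply Finset.sum_subset
    · intro x hx
      simp only [Finset.mem_range] at *
      omega
    · intro x hx hnx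
      simp only [Finset.mem_range] at hx hnx
      have hk : k + 1 < x := by omega
      simp [Nat.choose_eq_zero_of_lt hk]
  rw [hL, hR]
  simp only [mul_add, Finset.sum_add_distrib]
  rw [add_comm, ← eq_sub_iff_add_eq, ← Finset.sum_sub_distrib]
  rw [Finset.sum_range_succ, Finset.sum_range_succ' _ m]
  have h0 : C ((Nat.factorial 0 * m.choose 0 * (k + 1).choose 0 : ℕ) : ℂ) *
        (C (β ^ (m - 0)) * Y ^ (k + 1 - 0)) -
      C ((Nat.factorial 0 * m.choose 0 * k.choose 0 : ℕ) : ℂ) *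
        (C (β ^ (m - 0)) * Y ^ (k + 1 - 0)) = 0 := by
    simp
  have hm : C ((m.factorial * m.choose m * k.choose m : ℕ) : ℂ) *
      (C (((m - m : ℕ) : ℂ) * β ^ (m - m - 1)) * Y ^ (k - m)) = 0 := by
    simp
  rw [h0, hm, add_zero, add_zero]
  apply Finset.sum_congr rfl
  intro s hs
  simp only [Finset.mem_range] at hs
  have key : s.factorial * m.choose s * (m - s) = (s + 1).factorial * m.choose (s + 1) := by
    rw [Nat.factorial_succ, mul_assoc, ← Nat.choose_succ_right_eq]
    ring
  have keyC : (s.factorial : ℂ) * (m.choose s : ℂ) * ((m - s : ℕ) : ℂ)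
      = ((s + 1).factorial : ℂ) * (m.choose (s + 1) : ℂ) := by
    exact_mod_cast congrArg (Nat.cast : ℕ → ℂ) key
  have he1 : m - (s + 1) = m - s - 1 := by omega
  have he2 : k + 1 - (s + 1) = k - s := by omega
  rw [he1, he2]
  rw [← sub_mul, ← mul_assoc, ← mul_assoc, ← map_sub, ← map_mul, ← map_mul]
  congr 1
  rw [C_inj]
  simp only [Nat.choose_succ_succ, Nat.cast_mul, Nat.cast_add]
  linear_combination (β ^ (m - s - 1) * (k.choose s : ℂ)) * keyC
end

section
/- Let λ ∈ ℂ*, α, β ∈ ℂ with α ≠ 0. The W(1)-module Ω_{W(1)}(λ, α, β) = ℂ[t] with action L_{i,m}·t^k = ∑_{s=0}^{min(m,k)} s! binom(m,s) binom(k,s) λ^i β^{m−s−1}((m−s)α − iαβ + βt)(t−i)^{k−s} is simple. -/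
open Polynomial

/-- The value `L_{i,m}·t^k` in the module `Ω_{W(1)}(λ,α,β)`:
`∑_{s=0}^{min(m,k)} s! C(m,s) C(k,s) λ^i β^{m-s-1}((m-s)α - iαβ + βt)(t-i)^{k-s}`,
where `β^{m-s-1}((m-s)α - iαβ + βt)` is expanded as
`(m-s)αβ^{m-s-1} + β^{m-s}(t - iα)`, which for `s = m` is `t - iα`
(the convention for `β = 0`, `s = m`). -/
noncomputable def W1val (lam α β : ℂ) (i : ℤ) (m k : ℕ) : ℂ[X] :=
  ∑ s ∈ Finset.range (min m k + 1),
    C ((s.factorial * m.choose s * k.choose s : ℕ) * lam ^ i) *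
      (C (((m - s : ℕ) : ℂ) * α * β ^ (m - s - 1)) +
        C (β ^ (m - s)) * (X - C ((i : ℂ) * α))) *
      (X - C (i : ℂ)) ^ (k - s)

/-- The action of `L_{i,m}` on an arbitrary polynomial, extended linearly from the
values on monomials. -/
noncomputable def W1act (lam α β : ℂ) (i : ℤ) (m : ℕ) (f : ℂ[X]) : ℂ[X] :=
  f.sum fun k c => c • W1val lam α β i m k

/-! ### Auxiliary lemmas -/

lemma W1val_zero (lam α β : ℂ) (i : ℤ) (k : ℕ) :
    W1val lam α β i 0 k = C (lam ^ i) * ((X - C ((i : ℂ) * α)) * (X - C (i : ℂ)) ^ k) := by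
  rw [W1val]
  simp [Finset.sum_range_one]
  ring

lemma W1act_zero (lam α β : ℂ) (i : ℤ) (f : ℂ[X]) :
    W1act lam α β i 0 f =
      lam ^ i • ((X - C ((i : ℂ) * α)) * f.comp (X - C (i : ℂ))) := by
  rw [W1act, comp_eq_sum_left, Polynomial.sum_def, Polynomial.sum_def, Finset.mul_sum,
    Finset.smul_sum]
  refine Finset.sum_congr rfl fun k _ => ?_
  rw [W1val_zero]
  rw [smul_eq_C_mul, smul_eq_C_mul]
  ring

/-- The forward difference operator on polynomials. -/
noncomputable def Wdelta {R : Type*} [CommRing R] (p : R[X]) : R[X] :=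
  taylor (1 : R) p - p

lemma Wtaylor_coeff_of_le {R : Type*} [CommRing R] (q : R[X]) (m : ℕ)
    (h : q.natDegree ≤ m) : (taylor (1 : R) q).coeff m = q.coeff m := by
  rw [taylor_coeff]
  have h0 : (hasseDeriv m q).natDegree ≤ 0 := le_trans (natDegree_hasseDeriv_le q m) (by omega)
  rw [eq_C_of_natDegree_le_zero h0, eval_C, hasseDeriv_coeff, zero_add, Nat.choose_self,
    Nat.cast_one, one_mul]

lemma Wdelta_coeff {R : Type*} [CommRing R] (q : R[X]) (n : ℕ)
    (h : q.natDegree ≤ n + 1) :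
    (Wdelta q).coeff n = ((n + 1 : ℕ) : R) * q.coeff (n + 1) := by
  rw [Wdelta, coeff_sub, taylor_coeff]
  have h0 : (hasseDeriv n q).natDegree ≤ 1 := le_trans (natDegree_hasseDeriv_le q n) (by omega)
  rw [eval_eq_sum_range' (lt_of_le_of_lt h0 one_lt_two)]
  rw [show (2:ℕ) = 1 + 1 from rfl, Finset.sum_range_succ, Finset.sum_range_one]
  simp only [hasseDeriv_coeff, zero_add, Nat.choose_self, Nat.cast_one, one_mul, pow_zero,
    pow_one, mul_one]
  rw [Nat.add_comm 1 n, Nat.choose_succ_self_right]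
  ring

lemma Wdelta_natDegree_le {R : Type*} [CommRing R] (q : R[X]) (n : ℕ)
    (h : q.natDegree ≤ n + 1) : (Wdelta q).natDegree ≤ n := by
  rw [natDegree_le_iff_coeff_eq_zero]
  intro m hm
  have hm' : q.natDegree ≤ m := by omega
  rw [Wdelta, coeff_sub, Wtaylor_coeff_of_le q m hm', sub_self]

lemma Wdelta_iterate {R : Type*} [CommRing R] :
    ∀ (n : ℕ) (q : R[X]), q.natDegree ≤ n →
      Wdelta^[n] q = C ((n.factorial : R) * q.coeff n) := by
  intro n
  induction n with
  | zero =>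
      intro q h
      rw [Function.iterate_zero_apply, eq_C_of_natDegree_le_zero h]
      simp
  | succ n ih =>
      intro q h
      rw [Function.iterate_succ_apply, ih (Wdelta q) (Wdelta_natDegree_le q n h),
        Wdelta_coeff q n h, Nat.factorial_succ]
      push_cast
      ring_nf

/-- for `λ ≠ 0` and `α ≠ 0`, the `W(1)`-module `Ω_{W(1)}(λ,α,β)` is
simple: every subspace invariant under all `L_{i,m}` is `0` or everything. -/
theorem stmt_15 (lam α β : ℂ) (hlam : lam ≠ 0) (hα : α ≠ 0) :
    ∀ N : Submodule ℂ ℂ[X],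
      (∀ (i : ℤ) (m : ℕ) (f : ℂ[X]), f ∈ N → W1act lam α β i m f ∈ N) →
        N = ⊥ ∨ N = ⊤ := by
  intro N hN
  by_cases hbot : N = ⊥
  · exact Or.inl hbot
  right
  -- the Virasoro (m = 0) operators preserve N
  have hT : ∀ (i : ℤ) (f : ℂ[X]), f ∈ N →
      (X - C ((i : ℂ) * α)) * f.comp (X - C (i : ℂ)) ∈ N := by
    intro i f hf
    have h := hN i 0 f hf
    rw [W1act_zero] at h
    exact (N.smul_mem_iff (zpow_ne_zero i hlam)).mp h
  -- pick a nonzero element of N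
  obtain ⟨f, hfN, hf0⟩ := (Submodule.ne_bot_iff N).mp hbot
  set d : ℕ := f.natDegree with hd
  -- the bivariate polynomial whose evaluation at `i` is the action of `L_{i,0}`
  set A : (ℂ[X])[X] := C (-(C α)) * X + C (X : ℂ[X]) with hA
  set Binn : (ℂ[X])[X] := C (X : ℂ[X]) - X with hBinn
  set B : (ℂ[X])[X] := (f.map C).comp Binn with hB
  set q : (ℂ[X])[X] := A * B with hq
  have hCa : (-(C α) : ℂ[X]) ≠ 0 := by
    simp [hα]
  have hAdeg : A.natDegree = 1 := natDegree_linear hCa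
  have hAlc : A.leadingCoeff = -(C α) := leadingCoeff_linear hCa
  have hBinn' : Binn = -(X - C (X : ℂ[X])) := by rw [hBinn]; ring
  have hBinndeg : Binn.natDegree = 1 := by
    rw [hBinn', natDegree_neg, natDegree_X_sub_C]
  have hBinnlc : Binn.leadingCoeff = -1 := by
    rw [hBinn', leadingCoeff_neg, (monic_X_sub_C (X : ℂ[X])).leadingCoeff]
  have hmapdeg : (f.map (C : ℂ →+* ℂ[X])).natDegree = d :=
    natDegree_map_eq_of_injective C_injective f
  have hBdeg : B.natDegree = d := by
    rw [hB, natDegree_comp, hmapdeg, hBinndeg, mul_one]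
  have hBlc : B.leadingCoeff = C f.leadingCoeff * (-1) ^ d := by
    rw [hB, leadingCoeff_comp (by rw [hBinndeg]; exact one_ne_zero), hBinnlc,
      leadingCoeff_map_of_injective C_injective, hmapdeg]
  have hqdeg : q.natDegree ≤ d + 1 := by
    refine le_trans (natDegree_mul_le) ?_
    rw [hAdeg, hBdeg]
    omega
  have hqcoeff : q.coeff (d + 1) = -(C α) * (C f.leadingCoeff * (-1) ^ d) := by
    have h := coeff_mul_degree_add_degree A B
    rw [hAdeg, hBdeg, hAlc, hBlc] at h
    rw [hq, Nat.add_comm d 1, h]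
  have heval : ∀ i : ℤ, q.eval (C (i : ℂ)) =
      (X - C ((i : ℂ) * α)) * f.comp (X - C (i : ℂ)) := by
    intro i
    rw [hq, hA, hB, hBinn]
    simp only [eval_mul, eval_add, eval_sub, eval_C, eval_X, eval_comp, eval_map]
    rw [Polynomial.comp, map_mul]
    ring
  -- iterated differences of polynomials whose integer evaluations lie in N stay in N
  have hmem : ∀ (n : ℕ) (p : (ℂ[X])[X]), (∀ i : ℤ, p.eval (C (i : ℂ)) ∈ N) →
      ∀ i : ℤ, (Wdelta^[n] p).eval (C (i : ℂ)) ∈ N := by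
    intro n
    induction n with
    | zero => intro p hp i; simpa using hp i
    | succ n ih =>
        intro p hp i
        rw [Function.iterate_succ_apply]
        refine ih (Wdelta p) ?_ i
        intro j
        have hC1 : ((C (j : ℂ) : ℂ[X]) + 1) = C (((j + 1 : ℤ) : ℂ)) := by
          push_cast
          rw [map_add, map_one]
        have he : (Wdelta p).eval (C (j : ℂ)) =
            p.eval (C (((j + 1 : ℤ) : ℂ))) - p.eval (C (j : ℂ)) := by
          rw [Wdelta, eval_sub, taylor_apply, eval_comp, eval_add, eval_X, eval_C, hC1]
        rw [he]
        exact sub_mem (hp (j + 1)) (hp j)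
  have hqmem : ∀ i : ℤ, q.eval (C (i : ℂ)) ∈ N := by
    intro i
    rw [heval i]
    exact hT i f hfN
  have hconst := hmem (d + 1) q hqmem 0
  rw [Wdelta_iterate (d + 1) q hqdeg, eval_C, hqcoeff] at hconst
  set γ : ℂ := ((d + 1).factorial : ℂ) * (-α * (f.leadingCoeff * (-1) ^ d)) with hγdef
  have hCγ : (((d + 1).factorial : ℂ[X]) * (-(C α) * (C f.leadingCoeff * (-1) ^ d))) = C γ := by
    rw [hγdef, map_mul, map_mul, map_mul, map_neg, map_pow, map_neg, map_one, map_natCast]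
  rw [hCγ] at hconst
  have hγ : γ ≠ 0 := by
    rw [hγdef]
    refine mul_ne_zero (Nat.cast_ne_zero.mpr (Nat.factorial_ne_zero _)) ?_
    refine mul_ne_zero (neg_ne_zero.mpr hα) ?_
    exact mul_ne_zero (leadingCoeff_ne_zero.mpr hf0) (pow_ne_zero _ (by norm_num))
  have hone : (1 : ℂ[X]) ∈ N := by
    have h := N.smul_mem γ⁻¹ hconst
    rwa [smul_C, smul_eq_mul, inv_mul_cancel₀ hγ, C_1] at h
  have hX : ∀ k : ℕ, ((X : ℂ[X]) ^ k) ∈ N := by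
    intro k
    induction k with
    | zero => simpa using hone
    | succ k ih =>
        have h := hT 0 (X ^ k) ih
        simpa [pow_succ, mul_comm] using h
  rw [eq_top_iff]
  intro p _
  rw [← sum_C_mul_X_pow_eq p, Polynomial.sum_def]
  refine Submodule.sum_mem N fun n _ => ?_
  rw [← smul_eq_C_mul]
  exact N.smul_mem _ (hX n)
end

section
/- Ω_{W(1)}(λ₁, α₁, β₁) ≅ Ω_{W(1)}(λ₂, α₂, β₂) as W(1)-modules if and only if (λ₁, α₁, β₁) = (λ₂, α₂, β₂). -/
open Polynomial


open Polynomial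

lemma W1val_zero_zero (lam α β : ℂ) (k : ℕ) :
    W1val lam α β 0 0 k = X ^ (k + 1) := by
  simp [W1val, pow_succ, mul_comm]

lemma W1act_zero_zero (lam α β : ℂ) (f : ℂ[X]) :
    W1act lam α β 0 0 f = X * f := by
  unfold W1act
  simp only [W1val_zero_zero, Polynomial.smul_eq_C_mul]
  rw [Polynomial.sum_def]
  have : ∀ k ∈ f.support, C (f.coeff k) * X ^ (k + 1) = X * (C (f.coeff k) * X ^ k) := by
    intro k _; ring
  rw [Finset.sum_congr rfl this, ← Finset.mul_sum]
  congr 1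
  conv_rhs => rw [← Polynomial.sum_C_mul_X_pow_eq f]
  rw [Polynomial.sum_def]

lemma W1act_C (lam α β : ℂ) (i : ℤ) (m : ℕ) (c : ℂ) :
    W1act lam α β i m (C c) = c • W1val lam α β i m 0 := by
  unfold W1act
  rw [Polynomial.sum_C_index] ; simp

lemma scalar_of_commX (e : ℂ[X] ≃ₗ[ℂ] ℂ[X]) (he : ∀ f, e (X * f) = X * e f) :
    ∀ f, e f = f * e 1 := by
  intro f
  induction f using Polynomial.induction_on with
  | C a =>
      have : (C a : ℂ[X]) = a • (1 : ℂ[X]) := by simp [Polynomial.smul_eq_C_mul]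
      rw [this, map_smul, Polynomial.smul_eq_C_mul, smul_eq_C_mul, mul_one]
  | add p q hp hq => rw [map_add, hp, hq, add_mul]
  | monomial n a ih =>
      have : (C a : ℂ[X]) * X ^ (n + 1) = X * (C a * X ^ n) := by ring
      rw [this, he, ih]; ring

lemma W1val_one_zero (lam α β : ℂ) :
    W1val lam α β 1 0 0 = C lam * (X - C α) := by
  simp [W1val]

lemma W1val_zero_one (lam α β : ℂ) :
    W1val lam α β 0 1 0 = C α + C β * X := by
  simp [W1val]


theorem stmt_16 (lam₁ lam₂ α₁ α₂ β₁ β₂ : ℂ) (h₁ : lam₁ ≠ 0) (h₂ : lam₂ ≠ 0) :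
    (∃ e : ℂ[X] ≃ₗ[ℂ] ℂ[X],
        ∀ (i : ℤ) (m : ℕ) (f : ℂ[X]),
          e (W1act lam₁ α₁ β₁ i m f) = W1act lam₂ α₂ β₂ i m (e f)) ↔
      (lam₁ = lam₂ ∧ α₁ = α₂ ∧ β₁ = β₂) := by
  constructor
  · rintro ⟨e, hc⟩
    have hX : ∀ f, e (X * f) = X * e f := by
      intro f
      rw [← W1act_zero_zero lam₁ α₁ β₁, hc, W1act_zero_zero]
    have hs := scalar_of_commX e hX
    -- e 1 is a unit
    obtain ⟨g, hg⟩ := e.surjective 1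
    have hu : IsUnit (e 1) := IsUnit.of_mul_eq_one g (by rw [mul_comm, ← hs g, hg])
    obtain ⟨c, hcU, hC⟩ := Polynomial.isUnit_iff.mp hu
    have hc0 : c ≠ 0 := hcU.ne_zero
    have key : ∀ (i : ℤ) (m : ℕ),
        W1val lam₁ α₁ β₁ i m 0 = W1val lam₂ α₂ β₂ i m 0 := by
      intro i m
      have hE1 : e (C 1) = C c := by rw [hs, ← hC]; simp
      have h := hc i m (C 1)
      rw [W1act_C, one_smul, hE1, W1act_C, hs, ← hC, Polynomial.smul_eq_C_mul] at h
      have hCc : (C c : ℂ[X]) ≠ 0 := by simpa using hc0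
      apply mul_right_cancel₀ hCc
      rw [h, mul_comm]
    have k1 := key 1 0
    have k2 := key 0 1
    rw [W1val_one_zero, W1val_one_zero] at k1
    rw [W1val_zero_one, W1val_zero_one] at k2
    have e1 := congrArg (fun p => Polynomial.coeff p 1) k1
    have e0 := congrArg (fun p => Polynomial.coeff p 0) k1
    have e2 := congrArg (fun p => Polynomial.coeff p 1) k2
    simp [mul_sub, Polynomial.coeff_sub] at e1 e0 e2
    refine ⟨e1, ?_, e2⟩
    have := e0
    rw [e1] at this
    exact mul_left_cancel₀ h₂ this
  · rintro ⟨rfl, rfl, rfl⟩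
    exact ⟨LinearEquiv.refl ℂ ℂ[X], fun i m f => rfl⟩
end

section
/- Let β ∈ ℂ, i ∈ ℤ, m ∈ ℕ with m ≥ 1 (or m ≥ 0), k ∈ ℕ. Then in ℂ[t]: ∑_{s=0}^{k} (−1)^s s! binom(m+s−1, s) binom(k, s) β^{m+s} (t − i − (m+s)β)(t−i)^{k−s} = ∑_{s=0}^{k+1} (−1)^s s! binom(m+s−1, s) binom(k+1, s) β^{m+s} (t−i)^{k−s+1}, where binom(−1, 0) = 1. -/
open Polynomial

lemma natlem (m s : ℕ) : (m + s) * (m + s - 1).choose s = (s + 1) * (m + s).choose (s + 1) := by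
  cases m with
  | zero =>
    cases s with
    | zero => simp
    | succ s =>
      have h1 : (0 + (s+1) - 1).choose (s+1) = 0 :=
        Nat.choose_eq_zero_of_lt (by omega)
      have h2 : (0 + (s+1)).choose (s+1+1) = 0 :=
        Nat.choose_eq_zero_of_lt (by omega)
      simp [h1, h2]
  | succ m' =>
    have h := Nat.add_one_mul_choose_eq (m' + s) s
    have h3 : m' + 1 + s - 1 = m' + s := by omega
    have h4 : m' + 1 + s = (m' + s) + 1 := by omega
    rw [h3, h4]
    linarith [h]

lemma keylem (β : ℂ) (m k s : ℕ) :
    (-1 : ℂ) ^ (s+1) * (((s+1).factorial * (m + (s+1) - 1).choose (s+1) * k.choose (s+1) : ℕ) : ℂ) *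
        β ^ (m + (s+1))
      - (-1 : ℂ) ^ s * ((s.factorial * (m + s - 1).choose s * k.choose s : ℕ) : ℂ) * β ^ (m + s) *
        (((m + s : ℕ) : ℂ) * β)
    = (-1 : ℂ) ^ (s+1) * (((s+1).factorial * (m + (s+1) - 1).choose (s+1) * (k+1).choose (s+1) : ℕ) : ℂ) *
        β ^ (m + (s+1)) := by
  have h1 : m + (s+1) - 1 = m + s := by omega
  have hpascal : (k+1).choose (s+1) = k.choose s + k.choose (s+1) := Nat.choose_succ_succ k s
  have hnat : s.factorial * (m + s - 1).choose s * (m + s)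
      = (s+1).factorial * (m + s).choose (s+1) := by
    rw [Nat.factorial_succ]
    calc s.factorial * (m + s - 1).choose s * (m + s)
        = s.factorial * ((m + s) * (m + s - 1).choose s) := by ring
      _ = s.factorial * ((s + 1) * (m + s).choose (s + 1)) := by rw [natlem]
      _ = (s + 1) * s.factorial * (m + s).choose (s + 1) := by ring
  have hnatC : (s.factorial : ℂ) * ((m + s - 1).choose s : ℂ) * ((m : ℂ) + (s : ℂ))
      = ((s+1).factorial : ℂ) * ((m + s).choose (s+1) : ℂ) := by exact_mod_cast hnat
  rw [h1, hpascal]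
  push_cast
  linear_combination ((-1 : ℂ) ^ (s+1) * (k.choose s : ℂ) * β ^ (m + s + 1)) * hnatC

/-- the polynomial identity in `ℂ[t]`
`∑_{s=0}^{k} (-1)^s s! C(m+s-1,s) C(k,s) β^{m+s}(t - i - (m+s)β)(t-i)^{k-s}
  = ∑_{s=0}^{k+1} (-1)^s s! C(m+s-1,s) C(k+1,s) β^{m+s}(t-i)^{k+1-s}`,
with the convention `C(-1,0) = 1` (realised by the truncated subtraction `m+s-1` in `ℕ`,
so that for `m = s = 0` the coefficient is `C(0,0) = 1`). -/
theorem stmt_18 (β : ℂ) (i : ℤ) (m k : ℕ) :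
    ∑ s ∈ Finset.range (k + 1),
      C ((-1 : ℂ) ^ s * ((s.factorial * (m + s - 1).choose s * k.choose s : ℕ) : ℂ) *
          β ^ (m + s)) *
        (X - C ((i : ℂ) + ((m + s : ℕ) : ℂ) * β)) * (X - C (i : ℂ)) ^ (k - s) =
    ∑ s ∈ Finset.range (k + 2),
      C ((-1 : ℂ) ^ s * ((s.factorial * (m + s - 1).choose s * (k + 1).choose s : ℕ) : ℂ) *
          β ^ (m + s)) *
        (X - C (i : ℂ)) ^ (k + 1 - s) := by
  set a : ℕ → ℂ := fun s =>
    (-1 : ℂ) ^ s * ((s.factorial * (m + s - 1).choose s * k.choose s : ℕ) : ℂ) * β ^ (m + s)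
    with ha
  set b : ℕ → ℂ := fun s =>
    (-1 : ℂ) ^ s * ((s.factorial * (m + s - 1).choose s * (k+1).choose s : ℕ) : ℂ) * β ^ (m + s)
    with hb
  set y : ℂ[X] := X - C (i : ℂ) with hy
  have hterm : ∀ s ∈ Finset.range (k + 1),
      C (a s) * (X - C ((i : ℂ) + ((m + s : ℕ) : ℂ) * β)) * y ^ (k - s)
        = C (a s) * y ^ (k + 1 - s) - C (a s * (((m + s : ℕ) : ℂ) * β)) * y ^ (k - s) := by
    intro s hs
    have hsk : s ≤ k := Nat.lt_succ_iff.mp (Finset.mem_range.mp hs)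
    have hpow : k + 1 - s = (k - s) + 1 := by omega
    rw [hpow, hy]
    simp only [C_add, C_mul, pow_succ]
    ring
  rw [Finset.sum_congr rfl hterm, Finset.sum_sub_distrib]
  have hzero : a (k+1) = 0 := by simp [ha, Nat.choose_succ_self]
  have hA : ∑ s ∈ Finset.range (k + 1), C (a s) * y ^ (k + 1 - s)
      = ∑ s ∈ Finset.range (k + 1), C (a (s+1)) * y ^ (k - s) + C (a 0) * y ^ (k + 1) := by
    rw [Finset.sum_range_succ' (fun s => C (a s) * y ^ (k + 1 - s)) k]
    rw [Finset.sum_range_succ (fun s => C (a (s+1)) * y ^ (k - s)) k]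
    rw [hzero]
    simp [Nat.succ_sub_succ]
  have hB : ∑ s ∈ Finset.range (k + 2), C (b s) * y ^ (k + 1 - s)
      = ∑ s ∈ Finset.range (k + 1), C (b (s+1)) * y ^ (k - s) + C (b 0) * y ^ (k + 1) := by
    rw [Finset.sum_range_succ' (fun s => C (b s) * y ^ (k + 1 - s)) (k+1)]
    simp [Nat.succ_sub_succ]
  rw [hA, hB]
  have hab0 : a 0 = b 0 := by simp [ha, hb]
  have hkey : ∀ s ∈ Finset.range (k+1),
      C (a (s+1)) * y ^ (k - s) - C (a s * (((m + s : ℕ) : ℂ) * β)) * y ^ (k - s)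
        = C (b (s+1)) * y ^ (k - s) := by
    intro s _
    rw [← sub_mul, ← C_sub]
    congr 2
    simpa [ha, hb] using keylem β m k s
  have hsum : ∑ s ∈ Finset.range (k + 1),
      (C (a (s+1)) * y ^ (k - s) - C (a s * (((m + s : ℕ) : ℂ) * β)) * y ^ (k - s))
      = ∑ s ∈ Finset.range (k + 1), C (b (s+1)) * y ^ (k - s) :=
    Finset.sum_congr rfl hkey
  rw [Finset.sum_sub_distrib] at hsum
  rw [hab0] at *
  linear_combination hsum
end

section
/- Let λ ∈ ℂ*, α, β ∈ ℂ with α ≠ 0. The W(−1)-module Ω_{W(−1)}(λ, α, β) = ℂ[t] with action L_{i,m}·t^k = ∑_{s=0}^{k} (−1)^s s! binom(m+s−1, s) binom(k, s) λ^i β^{m+s}(t − iα − (m+s)αβ)(t−i)^{k−s} is simple, while for α = 0 the subspace t·ℂ[t] is a proper nonzero submodule. -/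
open Polynomial

/-- The value `L_{i,m}·t^k` in the module `Ω_{W(-1)}(λ,α,β)`:
`∑_{s=0}^{k} (-1)^s s! C(m+s-1,s) C(k,s) λ^i β^{m+s}(t - iα - (m+s)αβ)(t-i)^{k-s}`,
with the conventions `C(-1,0) = 1` and `C(n-1,n) = 0` for `n > 0` (realised by the
truncated subtraction `m+s-1` in `ℕ`). -/
noncomputable def Wm1val (lam α β : ℂ) (i : ℤ) (m k : ℕ) : ℂ[X] :=
  ∑ s ∈ Finset.range (k + 1),
    C ((-1 : ℂ) ^ s * ((s.factorial * (m + s - 1).choose s * k.choose s : ℕ) : ℂ) *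
        lam ^ i * β ^ (m + s)) *
      (X - C ((i : ℂ) * α + ((m + s : ℕ) : ℂ) * α * β)) *
      (X - C (i : ℂ)) ^ (k - s)

/-- The action of `L_{i,m}` on an arbitrary polynomial, extended linearly from the
values on monomials. -/
noncomputable def Wm1act (lam α β : ℂ) (i : ℤ) (m : ℕ) (f : ℂ[X]) : ℂ[X] :=
  f.sum fun k c => c • Wm1val lam α β i m k

lemma coeff_comp_X_add_one {R : Type*} [CommRing R] (P : R[X]) {M : ℕ} (hM : P.natDegree < M)
    (m : ℕ) :
    (P.comp (X + 1)).coeff m = ∑ k ∈ Finset.range M, P.coeff k * (k.choose m : R) := by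
  rw [comp_eq_sum_left, P.sum_over_range' (by simp) M hM, finset_sum_coeff]
  refine Finset.sum_congr rfl fun k _ => ?_
  rw [coeff_C_mul, coeff_X_add_one_pow]

lemma findiff {R : Type*} [CommRing R] :
    ∀ (n : ℕ) (P : R[X]), P.natDegree ≤ n →
    ∑ r ∈ Finset.range (n + 1), (-1 : R) ^ r * (n.choose r : R) * P.eval (r : R)
      = (-1 : R) ^ n * (n.factorial : R) * P.coeff n := by
  intro n
  induction n with
  | zero => intro P _; simp [coeff_zero_eq_eval_zero]
  | succ n ih =>
    intro P hP
    have hM : P.natDegree < n + 2 := by omega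
    set Q : R[X] := P.comp (X + 1) - P with hQdef
    have hQc : ∀ m, Q.coeff m =
        (∑ k ∈ Finset.range (n + 2), P.coeff k * (k.choose m : R)) - P.coeff m := by
      intro m; rw [hQdef, coeff_sub, coeff_comp_X_add_one P hM]
    have hQdeg : Q.natDegree ≤ n := by
      rw [natDegree_le_iff_coeff_eq_zero]
      intro m hm
      rw [hQc]
      rcases eq_or_lt_of_le (Nat.succ_le_of_lt hm) with h | h
      · -- m = n+1
        rw [Finset.sum_eq_single (n+1)]
        · rw [← h]; simp
        · intro k hk hkne
          have : k < n + 1 := by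
            rcases Finset.mem_range.mp hk with _; omega
          rw [← h, Nat.choose_eq_zero_of_lt this, Nat.cast_zero, mul_zero]
        · intro h'; simp at h'
      · -- m > n+1
        have h1 : P.coeff m = 0 := coeff_eq_zero_of_natDegree_lt (by omega)
        rw [h1, sub_zero]
        refine Finset.sum_eq_zero fun k hk => ?_
        have : k < m := by have := Finset.mem_range.mp hk; omega
        rw [Nat.choose_eq_zero_of_lt this, Nat.cast_zero, mul_zero]
    have hQn : Q.coeff n = (n + 1 : R) * P.coeff (n + 1) := by
      rw [hQc]
      rw [Finset.sum_range_succ, Finset.sum_range_succ]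
      rw [Finset.sum_eq_zero (fun k hk => by
        have : k < n := Finset.mem_range.mp hk
        rw [Nat.choose_eq_zero_of_lt this, Nat.cast_zero, mul_zero])]
      rw [Nat.choose_self, Nat.choose_succ_self_right]
      push_cast
      ring
    have hQeval : ∀ r : ℕ, Q.eval (r : R) = P.eval ((r + 1 : ℕ) : R) - P.eval (r : R) := by
      intro r
      rw [hQdef, eval_sub, eval_comp]
      push_cast
      simp
    -- main sum manipulation
    have key : ∑ r ∈ Finset.range (n + 2), (-1 : R) ^ r * ((n+1).choose r : R) * P.eval (r : R)
        = - ∑ r ∈ Finset.range (n + 1), (-1 : R) ^ r * (n.choose r : R) * Q.eval (r : R) := by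
      have hA : ∑ r ∈ Finset.range (n + 2), (-1 : R) ^ r * (n.choose r : R) * P.eval (r : R)
          = ∑ r ∈ Finset.range (n + 1), (-1 : R) ^ r * (n.choose r : R) * P.eval (r : R) := by
        rw [Finset.sum_range_succ, Nat.choose_succ_self, Nat.cast_zero]
        ring_nf
      calc ∑ r ∈ Finset.range (n + 2), (-1 : R) ^ r * ((n+1).choose r : R) * P.eval (r : R)
          = ∑ r ∈ Finset.range (n + 1),
              (-1 : R) ^ (r+1) * (((n.choose r : R)) + (n.choose (r+1) : R)) * P.eval ((r+1 : ℕ) : R)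
            + (-1:R) ^ 0 * ((n+1).choose 0 : R) * P.eval ((0:ℕ) : R) := by
            rw [Finset.sum_range_succ']
            congr 1
            refine Finset.sum_congr rfl fun r _ => ?_
            rw [Nat.choose_succ_succ]
            push_cast
            ring
        _ = (- ∑ r ∈ Finset.range (n + 1), (-1 : R) ^ r * (n.choose r : R) * P.eval ((r+1 : ℕ) : R))
            + (- ∑ r ∈ Finset.range (n + 1), (-1 : R) ^ r * (n.choose (r+1) : R) * P.eval ((r+1 : ℕ) : R))
            + P.eval ((0:ℕ) : R) := by
            rw [← Finset.sum_neg_distrib, ← Finset.sum_neg_distrib, ← Finset.sum_add_distrib]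
            congr 1
            · refine Finset.sum_congr rfl fun r _ => ?_
              push_cast
              ring
            · simp
        _ = - ∑ r ∈ Finset.range (n + 1), (-1 : R) ^ r * (n.choose r : R) * Q.eval (r : R) := by
            have hb : ∑ r ∈ Finset.range (n + 1),
                (-1 : R) ^ r * (n.choose (r+1) : R) * P.eval ((r+1 : ℕ) : R)
                = ∑ r ∈ Finset.range n,
                (-1 : R) ^ r * (n.choose (r+1) : R) * P.eval ((r+1 : ℕ) : R) := by
              rw [Finset.sum_range_succ, Nat.choose_succ_self, Nat.cast_zero]
              simp
            have hsucc' : ∑ r ∈ Finset.range (n + 1), (-1 : R) ^ r * (n.choose r : R) * P.eval ((r : ℕ) : R)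
                = ∑ r ∈ Finset.range n, (-1 : R) ^ (r+1) * (n.choose (r+1) : R) * P.eval ((r+1 : ℕ) : R)
                  + (-1:R) ^ 0 * (n.choose 0 : R) * P.eval ((0:ℕ) : R) :=
              Finset.sum_range_succ' _ n
            have hT : ∑ x ∈ Finset.range n,
                (-1:R)^(x+1) * (n.choose (x+1):R) * P.eval ((x+1:ℕ):R)
                = -∑ x ∈ Finset.range n, (-1:R)^x * (n.choose (x+1):R) * P.eval ((x+1:ℕ):R) := by
              rw [← Finset.sum_neg_distrib]
              exact Finset.sum_congr rfl fun x _ => by ring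
            simp only [hQeval, mul_sub]
            rw [Finset.sum_sub_distrib, hb, hsucc', hT]
            simp only [Nat.choose_zero_right, Nat.cast_one, pow_zero, one_mul]
            ring
    rw [key, ih Q hQdeg, hQn]
    push_cast [Nat.factorial_succ]
    ring

lemma Wm1val_zero (lam α β : ℂ) (i : ℤ) (k : ℕ) :
    Wm1val lam α β i 0 k = C (lam ^ i) * ((X - C ((i : ℂ) * α)) * (X - C (i : ℂ)) ^ k) := by
  unfold Wm1val
  rw [Finset.sum_eq_single 0]
  · simp [mul_assoc]
  · intro s hs hs0
    have h1 : (0 + s - 1).choose s = 0 := Nat.choose_eq_zero_of_lt (by omega)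
    rw [h1]
    simp
  · intro h
    simp at h

lemma Wm1act_zero (lam α β : ℂ) (i : ℤ) (f : ℂ[X]) :
    Wm1act lam α β i 0 f = lam ^ i • ((X - C ((i : ℂ) * α)) * f.comp (X - C (i : ℂ))) := by
  unfold Wm1act
  rw [comp_eq_sum_left]
  rw [Polynomial.sum_def, Polynomial.sum_def, Finset.mul_sum, Finset.smul_sum]
  refine Finset.sum_congr rfl fun k _ => ?_
  rw [Wm1val_zero, smul_eq_C_mul, smul_eq_C_mul]
  ring

noncomputable def Fpoly (α : ℂ) (f : ℂ[X]) : Polynomial ℂ[X] :=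
  (Polynomial.C (X : ℂ[X]) - Polynomial.C (Polynomial.C α) * Polynomial.X) *
    ∑ k ∈ Finset.range (f.natDegree + 1),
      Polynomial.C (Polynomial.C (f.coeff k)) * (Polynomial.C (X : ℂ[X]) - Polynomial.X) ^ k

lemma Fpoly_eval (α : ℂ) (f : ℂ[X]) (c : ℂ) :
    (Fpoly α f).eval (Polynomial.C c) = (X - C (c * α)) * f.comp (X - C c) := by
  unfold Fpoly
  rw [eval_mul, eval_sub, eval_C, eval_mul, eval_C, eval_X, eval_finset_sum]
  rw [comp_eq_sum_left, f.sum_over_range' (by simp) (f.natDegree + 1) (lt_add_one _)]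
  congr 1
  · rw [← C_mul, mul_comm]
  · refine Finset.sum_congr rfl fun k _ => ?_
    rw [eval_mul, eval_pow, eval_sub, eval_C, eval_X, eval_C]

lemma Fpoly_natDegree (α : ℂ) (f : ℂ[X]) : (Fpoly α f).natDegree ≤ f.natDegree + 1 := by
  unfold Fpoly
  refine le_trans (natDegree_mul_le) ?_
  have h1 : (Polynomial.C (X : ℂ[X]) - Polynomial.C (Polynomial.C α) * Polynomial.X).natDegree ≤ 1 :=
    le_trans (natDegree_sub_le _ _)
      (max_le (by simp) (le_trans (natDegree_C_mul_le _ _) natDegree_X_le))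
  have h2 : (∑ k ∈ Finset.range (f.natDegree + 1),
      Polynomial.C (Polynomial.C (f.coeff k)) * (Polynomial.C (X : ℂ[X]) - Polynomial.X) ^ k).natDegree
      ≤ f.natDegree := by
    refine natDegree_sum_le_of_forall_le _ _ fun k hk => ?_
    refine le_trans (natDegree_C_mul_le _ _) (le_trans (natDegree_pow_le) ?_)
    have hb : (Polynomial.C (X : ℂ[X]) - Polynomial.X).natDegree ≤ 1 :=
      le_trans (natDegree_sub_le _ _) (max_le (by simp) natDegree_X_le)
    have := Finset.mem_range.mp hk
    calc k * (Polynomial.C (X : ℂ[X]) - Polynomial.X).natDegree ≤ k * 1 := by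
          exact Nat.mul_le_mul_left _ hb
      _ ≤ f.natDegree := by omega
  omega

lemma coeff_C_sub_X_pow (d : ℕ) (t : ℂ[X]) :
    ((Polynomial.C t - Polynomial.X) ^ d).coeff d = (-1 : ℂ[X]) ^ d := by
  have h1 : (Polynomial.C t - Polynomial.X) = -(Polynomial.X - Polynomial.C t) := (neg_sub _ _).symm
  rw [h1]
  have hm : (Polynomial.X - Polynomial.C t).Monic := monic_X_sub_C t
  have hd : ((Polynomial.X - Polynomial.C t) ^ d).natDegree = d := by
    rw [natDegree_pow, natDegree_X_sub_C, mul_one]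
  have hc : ((Polynomial.X - Polynomial.C t) ^ d).coeff d = 1 := by
    have := (hm.pow d).coeff_natDegree
    rwa [hd] at this
  have h2 : (-(Polynomial.X - Polynomial.C t)) ^ d
      = (-1 : Polynomial ℂ[X]) ^ d * (Polynomial.X - Polynomial.C t) ^ d := by exact neg_pow ((Polynomial.X : Polynomial ℂ[X]) - Polynomial.C t) d
  rw [h2]
  rw [show ((-1 : Polynomial ℂ[X]) ^ d) = Polynomial.C ((-1 : ℂ[X]) ^ d) by
    rw [map_pow, map_neg, map_one]]
  rw [coeff_C_mul, hc, mul_one]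

lemma Fpoly_coeff (α : ℂ) (f : ℂ[X]) :
    (Fpoly α f).coeff (f.natDegree + 1)
      = (-1 : ℂ[X]) ^ (f.natDegree + 1) * C (α * f.coeff f.natDegree) := by
  set d := f.natDegree with hd
  set Q1 : Polynomial ℂ[X] := ∑ k ∈ Finset.range (d + 1),
      Polynomial.C (Polynomial.C (f.coeff k)) * (Polynomial.C (X : ℂ[X]) - Polynomial.X) ^ k
    with hQ1
  have hQ1deg : Q1.natDegree ≤ d := by
    refine natDegree_sum_le_of_forall_le _ _ fun k hk => ?_
    refine le_trans (natDegree_C_mul_le _ _) (le_trans (natDegree_pow_le) ?_)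
    have hb : (Polynomial.C (X : ℂ[X]) - Polynomial.X).natDegree ≤ 1 :=
      le_trans (natDegree_sub_le _ _) (max_le (by simp) natDegree_X_le)
    have := Finset.mem_range.mp hk
    calc k * (Polynomial.C (X : ℂ[X]) - Polynomial.X).natDegree ≤ k * 1 :=
          Nat.mul_le_mul_left _ hb
      _ ≤ d := by omega
  have hQ1d : Q1.coeff d = (-1 : ℂ[X]) ^ d * Polynomial.C (f.coeff d) := by
    rw [hQ1, finset_sum_coeff, Finset.sum_eq_single d]
    · rw [coeff_C_mul, coeff_C_sub_X_pow]; ring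
    · intro k hk hkd
      have hklt : k < d := by have := Finset.mem_range.mp hk; omega
      have hdeg : ((Polynomial.C (X : ℂ[X]) - Polynomial.X) ^ k).natDegree < d := by
        refine lt_of_le_of_lt (le_trans natDegree_pow_le ?_) hklt
        have hb : (Polynomial.C (X : ℂ[X]) - Polynomial.X).natDegree ≤ 1 :=
          le_trans (natDegree_sub_le _ _) (max_le (by simp) natDegree_X_le)
        calc k * (Polynomial.C (X : ℂ[X]) - Polynomial.X).natDegree ≤ k * 1 :=
              Nat.mul_le_mul_left _ hb
          _ ≤ k := by omega
      rw [coeff_C_mul, coeff_eq_zero_of_natDegree_lt hdeg, mul_zero]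
    · intro h; simp at h
  have hQ1d1 : Q1.coeff (d + 1) = 0 := coeff_eq_zero_of_natDegree_lt (by omega)
  show ((Polynomial.C (X : ℂ[X]) - Polynomial.C (Polynomial.C α) * Polynomial.X) * Q1).coeff (d+1) = _
  rw [sub_mul, coeff_sub, coeff_C_mul, hQ1d1, mul_zero, mul_assoc, coeff_C_mul, coeff_X_mul,
    hQ1d, map_mul]
  ring


/-- for `λ ≠ 0`, if `α ≠ 0` then the `W(-1)`-module `Ω_{W(-1)}(λ,α,β)`
is simple, while for `α = 0` the subspace `t·ℂ[t]` is a proper nonzero submodule. -/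
theorem stmt_19 (lam α β : ℂ) (hlam : lam ≠ 0) :
    (α ≠ 0 → ∀ N : Submodule ℂ ℂ[X],
      (∀ (i : ℤ) (m : ℕ) (f : ℂ[X]), f ∈ N → Wm1act lam α β i m f ∈ N) →
        N = ⊥ ∨ N = ⊤) ∧
    (α = 0 →
      (∀ (i : ℤ) (m : ℕ) (f : ℂ[X]), f ∈ tPoly → Wm1act lam α β i m f ∈ tPoly) ∧
      tPoly ≠ ⊥ ∧ tPoly ≠ ⊤) := by
  constructor
  · intro hα N hN
    by_cases hbot : N = ⊥
    · exact Or.inl hbot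
    right
    obtain ⟨f, hfN, hf0⟩ := (Submodule.ne_bot_iff N).mp hbot
    set d := f.natDegree with hd
    -- step 1: (X - C (r α)) * f(X - r) ∈ N for every natural r
    have hg : ∀ r : ℕ, (X - C ((r : ℂ) * α)) * f.comp (X - C (r : ℂ)) ∈ N := by
      intro r
      have h1 := hN (r : ℤ) 0 f hfN
      rw [Wm1act_zero] at h1
      have h2 := N.smul_mem (lam ^ (r : ℤ))⁻¹ h1
      rw [inv_smul_smul₀ (zpow_ne_zero _ hlam)] at h2
      have hc : ((r : ℤ) : ℂ) = (r : ℂ) := by push_cast; rfl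
      rwa [hc] at h2
    -- step 2: a nonzero constant lies in N
    have hCmem : Polynomial.C (α * f.coeff d) ∈ N := by
      have hsum : ∑ r ∈ Finset.range (d + 2),
          ((-1 : ℂ) ^ r * ((d + 1).choose r : ℂ)) •
            ((X - C ((r : ℂ) * α)) * f.comp (X - C (r : ℂ))) ∈ N :=
        Submodule.sum_mem _ fun r _ => Submodule.smul_mem _ _ (hg r)
      have heq : (∑ r ∈ Finset.range (d + 2),
          ((-1 : ℂ) ^ r * ((d + 1).choose r : ℂ)) •
            ((X - C ((r : ℂ) * α)) * f.comp (X - C (r : ℂ))))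
          = (((d + 1).factorial : ℂ)) • Polynomial.C (α * f.coeff d) := by
        have hfd := findiff (d + 1) (Fpoly α f) (Fpoly_natDegree α f)
        calc ∑ r ∈ Finset.range (d + 2),
              ((-1 : ℂ) ^ r * ((d + 1).choose r : ℂ)) •
                ((X - C ((r : ℂ) * α)) * f.comp (X - C (r : ℂ)))
            = ∑ r ∈ Finset.range (d + 2),
              (-1 : ℂ[X]) ^ r * (((d + 1).choose r : ℂ[X])) *
                (Fpoly α f).eval ((r : ℕ) : ℂ[X]) := by
              refine Finset.sum_congr rfl fun r _ => ?_
              rw [show ((r : ℕ) : ℂ[X]) = Polynomial.C (r : ℂ) by rfl]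
              rw [Fpoly_eval, smul_eq_C_mul, map_mul, map_pow, map_neg, map_one, C_eq_natCast]
          _ = (-1 : ℂ[X]) ^ (d + 1) * (((d + 1).factorial : ℂ[X])) *
                (Fpoly α f).coeff (d + 1) := hfd
          _ = (((d + 1).factorial : ℂ)) • Polynomial.C (α * f.coeff d) := by
              rw [Fpoly_coeff, smul_eq_C_mul]
              have h2 : ((-1 : ℂ[X]) ^ (d + 1)) * ((-1 : ℂ[X]) ^ (d + 1)) = 1 := by
                rw [← pow_add]
                exact Even.neg_one_pow ⟨d + 1, by ring⟩
              calc (-1 : ℂ[X]) ^ (d + 1) * (((d + 1).factorial : ℂ[X])) *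
                    ((-1 : ℂ[X]) ^ (d + 1) * C (α * f.coeff d))
                  = ((-1 : ℂ[X]) ^ (d + 1) * (-1 : ℂ[X]) ^ (d + 1)) *
                      ((((d + 1).factorial : ℂ[X])) * C (α * f.coeff d)) := by ring
                _ = (((d + 1).factorial : ℂ[X])) * C (α * f.coeff d) := by rw [h2, one_mul]
                _ = C (((d + 1).factorial : ℂ)) * C (α * f.coeff d) := by rfl
      rw [heq] at hsum
      have h3 := N.smul_mem (((d + 1).factorial : ℂ))⁻¹ hsum
      rwa [inv_smul_smul₀ (Nat.cast_ne_zero.mpr (Nat.factorial_ne_zero _))] at h3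
    -- step 3: 1 ∈ N
    have h1N : (1 : ℂ[X]) ∈ N := by
      have hne : α * f.coeff d ≠ 0 :=
        mul_ne_zero hα (by rw [hd, ← leadingCoeff]; exact leadingCoeff_ne_zero.mpr hf0)
      have h2 := N.smul_mem (α * f.coeff d)⁻¹ hCmem
      rwa [smul_C, smul_eq_mul, inv_mul_cancel₀ hne, C_1] at h2
    -- step 4: closure under multiplication by X
    have hX : ∀ p ∈ N, (X : ℂ[X]) * p ∈ N := by
      intro p hp
      have h1 := hN 0 0 p hp
      rw [Wm1act_zero] at h1
      simpa using h1
    have hXpow : ∀ k : ℕ, (X : ℂ[X]) ^ k ∈ N := by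
      intro k
      induction k with
      | zero => simpa using h1N
      | succ k ih =>
        have := hX _ ih
        rwa [← pow_succ'] at this
    rw [eq_top_iff]
    intro p _
    rw [p.as_sum_range' (p.natDegree + 1) (lt_add_one _)]
    refine Submodule.sum_mem _ fun k _ => ?_
    rw [← C_mul_X_pow_eq_monomial, ← smul_eq_C_mul]
    exact N.smul_mem _ (hXpow k)
  · intro hα
    subst hα
    refine ⟨?_, ?_, ?_⟩
    · intro i m f _
      have hdvd : (X : ℂ[X]) ∣ Wm1act lam 0 β i m f := by
        unfold Wm1act
        rw [Polynomial.sum_def]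
        refine Finset.dvd_sum fun k _ => ?_
        rw [smul_eq_C_mul]
        refine Dvd.dvd.mul_left ?_ _
        unfold Wm1val
        refine Finset.dvd_sum fun s _ => ?_
        have h0 : (X - C ((i : ℂ) * 0 + ((m + s : ℕ) : ℂ) * 0 * β)) = (X : ℂ[X]) := by
          simp
        rw [h0]
        exact Dvd.dvd.mul_right (dvd_mul_left _ _) _
      obtain ⟨q, hq⟩ := hdvd
      exact ⟨q, by rw [LinearMap.mulLeft_apply]; exact hq.symm⟩
    · intro h
      have hX : (X : ℂ[X]) ∈ tPoly := ⟨1, by rw [LinearMap.mulLeft_apply]; exact mul_one X⟩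
      rw [h, Submodule.mem_bot] at hX
      exact X_ne_zero hX
    · intro h
      have h1 : (1 : ℂ[X]) ∈ tPoly := by rw [h]; trivial
      obtain ⟨q, hq⟩ := h1
      rw [LinearMap.mulLeft_apply] at hq
      have := congrArg (Polynomial.eval (0 : ℂ)) hq
      simp at this
end
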